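/- arXiv:2406.02098 — 2 statements merged into one kernel-verified Lean document; each statement's English description precedes it below -/
import Mathlib

section
/- For every A > 0, T_sub(A) := sup{𝒯_H : H ∈ 𝒜_sub(A)} is finite. Moreover, lim sup_{A→0⁺} T_sub(A) · A^{2(p−1)/(2−(n−1)(p−1))} < ∞; equivalently, there exist A₀ > 0 and C > 0 such that for all A ∈ (0, A₀), every H ∈ 𝒜_sub(A) defined on [0, 𝒯_H) satisfies 𝒯_H ≤ C A^{−2(p−1)/(2−(n−1)(p−1))}. -/
/-!
Convexity `H'' ≥ A` gives `H' ≥ A t`. Hence after a time `T ≥ T₀` the function `Z = H - H(T)`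
starts from `0`, exceeds `A T²` at `2T`, and satisfies `Z'' ≥ k Z ^ p` on `[T, 4T]` with
`k = (5T) ^ σ`, where `(t + 1) ^ σ` is the weight of the forcing. The energy
`Z' ^ 2 - 2k/(p+1) Z ^ (p+1)` is nondecreasing, so `Z' ≥ √(2k/(p+1)) Z ^ ((p+1)/2)`, and
Osgood's argument bounds the time `Z` survives after `2T`:
`(p - 1)² (5T) ^ σ (2T)² (A T²) ^ (p - 1) ≤ 2 (p + 1)`. In the subcritical range
`σ + 2p = (2 - (n - 1)(p - 1)) / 2 > 0`, so this says `T ≲ A ^ (-2(p-1)/(2-(n-1)(p-1)))`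
for every `T ≥ max T₀ 1` with `4T` below the existence time.
-/

open Set

/-- One-sided first derivative on `[0, ∞)`. -/
noncomputable def Hd (H : ℝ → ℝ) : ℝ → ℝ := derivWithin H (Set.Ici 0)

/-- One-sided second derivative on `[0, ∞)`. -/
noncomputable def Hdd (H : ℝ → ℝ) : ℝ → ℝ := derivWithin (Hd H) (Set.Ici 0)

/-- `H ∈ 𝒜_sub(A)` with (possibly infinite) existence time `S = 𝒯_H`:
`H` is `C²` on `[0, S)`, `H(0) = H'(0) = 0`, `H''(t) ≥ A` on `[0, S)`, and
`H''(t) ≥ (t+1)^{-(n+3)p/2 + (n+1)/2} H(t)^p` on `[T₀, S)`. -/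
def MemAsub (n : ℕ) (p T₀ A : ℝ) (H : ℝ → ℝ) (S : EReal) : Prop :=
  0 < S ∧
  ContDiffOn ℝ 2 H {t : ℝ | 0 ≤ t ∧ (t : EReal) < S} ∧
  H 0 = 0 ∧ Hd H 0 = 0 ∧
  (∀ t : ℝ, 0 ≤ t → (t : EReal) < S → A ≤ Hdd H t) ∧
  (∀ t : ℝ, T₀ ≤ t → (t : EReal) < S →
    (t + 1) ^ (-(((n : ℝ) + 3) * p / 2) + ((n : ℝ) + 1) / 2) * H t ^ p ≤ Hdd H t)

/-- The constant `b₀`. -/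
noncomputable def bb0 (n : ℕ) (p : ℝ) : ℝ :=
  1 / (p - 1) - ((n : ℝ) - 1) / 2 + max 0 (((n : ℝ) + 3) / 2 - 1 / (p - 1)) * p⁻¹

/-- The constant `b₁`. -/
noncomputable def bb1 (n : ℕ) (p : ℝ) : ℝ :=
  1 / (p - 1) - ((n : ℝ) - 1) / 2 + max 0 (((n : ℝ) + 1) / 2 - 1 / (p - 1)) * p⁻¹


def HasDerivOnIcc (f f' : ℝ → ℝ) (a b : ℝ) : Prop :=
  ContinuousOn f (Icc a b) ∧ ∀ x ∈ Ioo a b, HasDerivAt f (f' x) x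

namespace HasDerivOnIcc

variable {f f' g g' : ℝ → ℝ} {a b : ℝ}

lemma mono (hf : HasDerivOnIcc f f' a b) {c d : ℝ} (hac : a ≤ c) (hdb : d ≤ b) :
    HasDerivOnIcc f f' c d :=
  ⟨hf.1.mono (Icc_subset_Icc hac hdb), fun x hx => hf.2 x (Ioo_subset_Ioo hac hdb hx)⟩

lemma sub_const (hf : HasDerivOnIcc f f' a b) (c : ℝ) :
    HasDerivOnIcc (fun x => f x - c) f' a b :=
  ⟨hf.1.sub continuousOn_const, fun x hx => (hf.2 x hx).sub_const c⟩

lemma monotoneOn (hf : HasDerivOnIcc f f' a b) (hf' : ∀ x ∈ Ioo a b, 0 ≤ f' x) :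
    MonotoneOn f (Icc a b) := by
  refine monotoneOn_of_hasDerivWithinAt_nonneg (f' := f') (convex_Icc a b) hf.1 ?_ ?_ <;>
    rw [interior_Icc]
  exacts [fun x hx => (hf.2 x hx).hasDerivWithinAt, hf']

lemma sub_le_sub (hf : HasDerivOnIcc f f' a b) (hg : HasDerivOnIcc g g' a b)
    (hle : ∀ x ∈ Ioo a b, g' x ≤ f' x) {x y : ℝ} (hx : x ∈ Icc a b) (hy : y ∈ Icc a b)
    (hxy : x ≤ y) : g y - g x ≤ f y - f x := by
  have hmono : MonotoneOn (fun t => f t - g t) (Icc a b) :=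
    monotoneOn (f' := fun t => f' t - g' t)
      ⟨hf.1.sub hg.1, fun t ht => (hf.2 t ht).sub (hg.2 t ht)⟩ fun t ht => sub_nonneg.2 (hle t ht)
  linarith [hmono hx hy hxy]

end HasDerivOnIcc

lemma hasDerivOnIcc_const_mul (c a b : ℝ) : HasDerivOnIcc (fun x => c * x) (fun _ => c) a b :=
  ⟨(continuous_const_mul c).continuousOn, fun x _ => by simpa using (hasDerivAt_id x).const_mul c⟩

/-- Osgood's argument: `-G ^ (1 - γ)` grows at rate at least `(γ - 1) c`, but stays negative. -/
lemma HasDerivOnIcc.mul_sub_le_rpow {G G' : ℝ → ℝ} {a b c γ : ℝ} (hG : HasDerivOnIcc G G' a b)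
    (hab : a ≤ b) (hγ : 1 < γ) (hpos : ∀ x ∈ Icc a b, 0 < G x)
    (hle : ∀ x ∈ Ioo a b, c * G x ^ γ ≤ G' x) : (γ - 1) * c * (b - a) ≤ G a ^ (1 - γ) := by
  have hF : HasDerivOnIcc (fun x => -G x ^ (1 - γ))
      (fun x => -(G' x * (1 - γ) * G x ^ (1 - γ - 1))) a b :=
    ⟨(hG.1.rpow_const fun x hx => Or.inl (hpos x hx).ne').neg, fun x hx =>
      ((hG.2 x hx).rpow_const (Or.inl (hpos x (Ioo_subset_Icc_self hx)).ne')).neg⟩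
  have hrate : ∀ x ∈ Ioo a b, (γ - 1) * c ≤ -(G' x * (1 - γ) * G x ^ (1 - γ - 1)) := by
    intro x hx
    have hGx := hpos x (Ioo_subset_Icc_self hx)
    have hinv : G x ^ γ * G x ^ (1 - γ - 1) = 1 := by
      rw [← Real.rpow_add hGx]; norm_num
    have := mul_le_mul_of_nonneg_right (hle x hx) (Real.rpow_nonneg hGx.le (1 - γ - 1))
    rw [mul_assoc, hinv] at this
    nlinarith
  have := hF.sub_le_sub (hasDerivOnIcc_const_mul _ a b) hrate (left_mem_Icc.2 hab)
    (right_mem_Icc.2 hab) hab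
  linarith [Real.rpow_nonneg (hpos b (right_mem_Icc.2 hab)).le (1 - γ)]

section Blowup

variable {y y' y'' : ℝ → ℝ} {a b k p : ℝ}

lemma energy_le (hy : HasDerivOnIcc y y' a b) (hy' : HasDerivOnIcc y' y'' a b)
    (hp : 0 ≤ p) (hmono : ∀ x ∈ Ioo a b, 0 ≤ y' x) (hforce : ∀ x ∈ Ioo a b, k * y x ^ p ≤ y'' x)
    {x : ℝ} (hx : x ∈ Icc a b) :
    2 * k / (p + 1) * (y x ^ (p + 1) - y a ^ (p + 1)) ≤ y' x ^ 2 - y' a ^ 2 := by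
  have hp1 : (1 : ℝ) ≤ p + 1 := by linarith
  have hsq : HasDerivOnIcc (fun t => y' t ^ 2) (fun t => 2 * y' t * y'' t) a b :=
    ⟨hy'.1.pow 2, fun t ht => by simpa using (hy'.2 t ht).fun_pow 2⟩
  have hpow : HasDerivOnIcc (fun t => 2 * k / (p + 1) * y t ^ (p + 1))
      (fun t => 2 * k / (p + 1) * (y' t * (p + 1) * y t ^ (p + 1 - 1))) a b :=
    ⟨continuousOn_const.mul (hy.1.rpow_const fun _ _ => Or.inr (by linarith)),
      fun t ht => ((hy.2 t ht).rpow_const (Or.inr hp1)).const_mul _⟩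
  have := hsq.sub_le_sub hpow (fun t ht => by
      have h := mul_le_mul_of_nonneg_left (hforce t ht) (mul_nonneg zero_le_two (hmono t ht))
      field_simp
      simp only [add_sub_cancel_right]
      linarith) (left_mem_Icc.2 (hx.1.trans hx.2)) hx hx.1
  linarith

lemma lifespan_sq_le (hy : HasDerivOnIcc y y' a b) (hy' : HasDerivOnIcc y' y'' a b)
    (ha : y a = 0) (hp : 1 < p) (hk : 0 ≤ k) (hmono : ∀ x ∈ Ioo a b, 0 ≤ y' x)
    (hforce : ∀ x ∈ Ioo a b, k * y x ^ p ≤ y'' x) {m : ℝ} (hm : m ∈ Icc a b) (hym : 0 < y m) :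
    (p - 1) ^ 2 * k * (b - m) ^ 2 * y m ^ (p - 1) ≤ 2 * (p + 1) := by
  have hymono := hy.monotoneOn hmono
  have hab : a ≤ b := hm.1.trans hm.2
  have hpos : ∀ x ∈ Icc m b, 0 < y x := fun x hx =>
    hym.trans_le (hymono hm ⟨hm.1.trans hx.1, hx.2⟩ hx.1)
  set c := √(2 * k / (p + 1))
  have hc : c ^ 2 = 2 * k / (p + 1) := Real.sq_sqrt (by positivity)
  have hrate : ∀ x ∈ Ioo m b, c * y x ^ ((p + 1) / 2) ≤ y' x := by
    intro x hx
    have hx' : x ∈ Ioo a b := ⟨hm.1.trans_lt hx.1, hx.2⟩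
    have hen := energy_le hy hy' (by linarith) hmono hforce (Ioo_subset_Icc_self hx')
    rw [ha, Real.zero_rpow (by linarith)] at hen
    have hyx := hpos x (Ioo_subset_Icc_self hx)
    refine (pow_le_pow_iff_left₀ (mul_nonneg (Real.sqrt_nonneg _) (Real.rpow_nonneg hyx.le _))
      (hmono x hx') two_ne_zero).1 ?_
    rw [mul_pow, hc, ← Real.rpow_mul_natCast hyx.le,
      show (p + 1) / 2 * ((2 : ℕ) : ℝ) = p + 1 by push_cast; ring]
    nlinarith [sq_nonneg (y' a)]
  have hosg := (hy.mono hm.1 le_rfl).mul_sub_le_rpow hm.2 (by linarith) hpos hrate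
  have hsq := pow_le_pow_left₀
    (mul_nonneg (mul_nonneg (by linarith) (Real.sqrt_nonneg _)) (sub_nonneg.2 hm.2)) hosg 2
  rw [← Real.rpow_mul_natCast hym.le, mul_pow, mul_pow, hc] at hsq
  have hinv : y m ^ ((1 - (p + 1) / 2) * (2 : ℕ)) * y m ^ (p - 1) = 1 := by
    rw [← Real.rpow_add hym, show (1 - (p + 1) / 2) * ((2 : ℕ) : ℝ) + (p - 1) = 0 by
      push_cast; ring, Real.rpow_zero]
  have := mul_le_mul_of_nonneg_right hsq (Real.rpow_nonneg hym.le (p - 1))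
  rw [hinv] at this
  calc (p - 1) ^ 2 * k * (b - m) ^ 2 * y m ^ (p - 1)
      = 2 * (p + 1) *
          (((p + 1) / 2 - 1) ^ 2 * (2 * k / (p + 1)) * (b - m) ^ 2 * y m ^ (p - 1)) := by
        field_simp
        ring
    _ ≤ 2 * (p + 1) := by nlinarith

end Blowup

lemma forced_lifespan_le {y y' y'' : ℝ → ℝ} {A T p σ : ℝ}
    (hy : HasDerivOnIcc y y' 0 (4 * T)) (hy' : HasDerivOnIcc y' y'' 0 (4 * T))
    (h0 : y 0 = 0) (h0' : y' 0 = 0) (hA : 0 < A) (hT : 1 ≤ T) (hp : 1 < p) (hσ : σ ≤ 0)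
    (hconvex : ∀ x ∈ Ioo 0 (4 * T), A ≤ y'' x)
    (hforce : ∀ x ∈ Ioo T (4 * T), (x + 1) ^ σ * y x ^ p ≤ y'' x) :
    (p - 1) ^ 2 * (5 * T) ^ σ * (2 * T) ^ 2 * (A * T ^ 2) ^ (p - 1) ≤ 2 * (p + 1) := by
  have hT0 : 0 < T := by linarith
  have hslope : ∀ x ∈ Icc 0 (4 * T), A * x ≤ y' x := by
    intro x hx
    have := hy'.sub_le_sub (hasDerivOnIcc_const_mul A 0 (4 * T)) hconvex
      (left_mem_Icc.2 (by linarith)) hx hx.1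
    linarith
  have hy'nn : ∀ x ∈ Ioo 0 (4 * T), 0 ≤ y' x := fun x hx =>
    (mul_nonneg hA.le hx.1.le).trans (hslope x (Ioo_subset_Icc_self hx))
  have hmono := hy.monotoneOn hy'nn
  have hyT : 0 ≤ y T := h0 ▸ hmono (left_mem_Icc.2 (by linarith)) ⟨hT0.le, by linarith⟩ hT0.le
  set Z := fun x => y x - y T
  have hZ2T : A * T ^ 2 ≤ Z (2 * T) := by
    have := (hy.mono hT0.le (by linarith : 2 * T ≤ 4 * T)).sub_le_sub
      (hasDerivOnIcc_const_mul (A * T) T (2 * T))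
      (fun x hx => (mul_le_mul_of_nonneg_left hx.1.le hA.le).trans
        (hslope x ⟨by linarith [hx.1], by linarith [hx.2]⟩))
      (left_mem_Icc.2 (by linarith)) (right_mem_Icc.2 (by linarith)) (by linarith)
    linarith
  have hZforce : ∀ x ∈ Ioo T (4 * T), (5 * T) ^ σ * Z x ^ p ≤ y'' x := by
    intro x hx
    have hZx : 0 ≤ Z x :=
      sub_nonneg.2 (hmono ⟨hT0.le, by linarith⟩ ⟨by linarith [hx.1], hx.2.le⟩ hx.1.le)
    calc (5 * T) ^ σ * Z x ^ p ≤ (x + 1) ^ σ * y x ^ p := by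
          refine mul_le_mul
            (Real.rpow_le_rpow_of_nonpos (by linarith [hx.1]) (by linarith [hx.2]) hσ)
            (Real.rpow_le_rpow hZx (by linarith) (by linarith)) (Real.rpow_nonneg hZx p)
            (Real.rpow_nonneg (by linarith [hx.1]) σ)
      _ ≤ y'' x := hforce x hx
  have hlife := lifespan_sq_le ((hy.mono hT0.le le_rfl).sub_const (y T)) (hy'.mono hT0.le le_rfl)
    (sub_self _) hp (Real.rpow_nonneg (by positivity) σ)
    (fun x hx => hy'nn x ⟨hT0.trans hx.1, hx.2⟩) hZforce (m := 2 * T)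
    ⟨by linarith, by linarith⟩ (hZ2T.trans_lt' (by positivity))
  calc (p - 1) ^ 2 * (5 * T) ^ σ * (2 * T) ^ 2 * (A * T ^ 2) ^ (p - 1)
      ≤ (p - 1) ^ 2 * (5 * T) ^ σ * (4 * T - 2 * T) ^ 2 * Z (2 * T) ^ (p - 1) := by
        rw [show 4 * T - 2 * T = 2 * T by ring]
        gcongr
    _ ≤ 2 * (p + 1) := hlife

lemma le_mul_rpow_of_forced_lifespan_le {A T p σ : ℝ} (hA : 0 < A) (hT : 0 < T) (hp : 1 < p)
    (he : 0 < σ + 2 * p)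
    (h : (p - 1) ^ 2 * (5 * T) ^ σ * (2 * T) ^ 2 * (A * T ^ 2) ^ (p - 1) ≤ 2 * (p + 1)) :
    T ≤ ((p + 1) / (2 * (p - 1) ^ 2 * 5 ^ σ)) ^ (σ + 2 * p)⁻¹ *
      A ^ (-((p - 1) / (σ + 2 * p))) := by
  have hD : 0 < 2 * (p - 1) ^ 2 * 5 ^ σ := by
    have : p - 1 ≠ 0 := by linarith
    positivity
  set K := (p + 1) / (2 * (p - 1) ^ 2 * 5 ^ σ)
  have hK : 0 < K := div_pos (by linarith) hD
  have hTpow : T ^ (σ + 2 * p) ≤ K * A ^ (-(p - 1)) := by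
    have hT2 : (T ^ 2) ^ (p - 1) = T ^ (2 * (p - 1)) := by
      rw [← Real.rpow_natCast_mul hT.le]; norm_num
    have hsplit : (p - 1) ^ 2 * (5 * T) ^ σ * (2 * T) ^ 2 * (A * T ^ 2) ^ (p - 1) =
        (2 * (p - 1) ^ 2 * 5 ^ σ) * (T ^ (σ + 2 * p) * A ^ (p - 1)) * 2 := by
      rw [Real.mul_rpow (by norm_num) hT.le, Real.mul_rpow hA.le (by positivity), hT2,
        show σ + 2 * p = σ + 2 + 2 * (p - 1) by ring, Real.rpow_add hT, Real.rpow_add hT,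
        Real.rpow_two]
      ring
    rw [Real.rpow_neg hA.le, ← div_eq_mul_inv, le_div_iff₀ (by positivity), le_div_iff₀ hD]
    nlinarith
  calc T = (T ^ (σ + 2 * p)) ^ (σ + 2 * p)⁻¹ := (Real.rpow_rpow_inv hT.le he.ne').symm
    _ ≤ (K * A ^ (-(p - 1))) ^ (σ + 2 * p)⁻¹ := by gcongr
    _ = K ^ (σ + 2 * p)⁻¹ * A ^ (-((p - 1) / (σ + 2 * p))) := by
      rw [Real.mul_rpow hK.le (by positivity), ← Real.rpow_mul hA.le, neg_mul, div_eq_mul_inv]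

lemma hasDerivAt_derivWithin_Ici {f : ℝ → ℝ} {x : ℝ} (hx : 0 < x) (hf : DifferentiableAt ℝ f x) :
    HasDerivAt f (derivWithin f (Ici 0) x) x := by
  rw [derivWithin_of_mem_nhds (Ici_mem_nhds hx)]
  exact hf.hasDerivAt

lemma hasDerivOnIcc_Hd_Hdd {H : ℝ → ℝ} {S : EReal}
    (hH : ContDiffOn ℝ 2 H {t : ℝ | 0 ≤ t ∧ (t : EReal) < S}) {b : ℝ} (hb : (b : EReal) < S) :
    HasDerivOnIcc H (Hd H) 0 b ∧ HasDerivOnIcc (Hd H) (Hdd H) 0 b := by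
  set U := {t : ℝ | (t : EReal) < S}
  have hU : IsOpen U := isOpen_lt continuous_coe_real_ereal continuous_const
  change ContDiffOn ℝ 2 H (Ici 0 ∩ U) at hH
  have hsub : Icc 0 b ⊆ Ici 0 ∩ U := fun t ht =>
    ⟨ht.1, (EReal.coe_le_coe_iff.2 ht.2).trans_lt hb⟩
  have hnhds : ∀ x ∈ Ioo 0 b, Ici 0 ∩ U ∈ nhds x := fun x hx =>
    Filter.mem_of_superset
      ((isOpen_Ioi.inter hU).mem_nhds ⟨hx.1, (hsub (Ioo_subset_Icc_self hx)).2⟩)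
      (inter_subset_inter_left _ Ioi_subset_Ici_self)
  have hHd : EqOn (derivWithin H (Ici 0 ∩ U)) (Hd H) (Ici 0 ∩ U) := fun x hx =>
    derivWithin_inter (hU.mem_nhds hx.2)
  have hHd' : ContDiffOn ℝ 1 (Hd H) (Ici 0 ∩ U) :=
    (hH.derivWithin ((uniqueDiffOn_Ici 0).inter hU) (by norm_num)).congr hHd.symm
  exact ⟨⟨hH.continuousOn.mono hsub, fun x hx => hasDerivAt_derivWithin_Ici hx.1
      ((hH.differentiableOn (by norm_num)).differentiableAt (hnhds x hx))⟩,
    ⟨hHd'.continuousOn.mono hsub, fun x hx => hasDerivAt_derivWithin_Ici hx.1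
      ((hHd'.differentiableOn (by norm_num)).differentiableAt (hnhds x hx))⟩⟩

lemma EReal.le_coe_of_forall_coe_lt_imp_le {S : EReal} {M : ℝ}
    (h : ∀ r : ℝ, (r : EReal) < S → r ≤ M) : S ≤ M :=
  EReal.le_of_forall_lt_iff_le.1 fun z hz =>
    le_of_not_gt fun hzS => (EReal.coe_lt_coe_iff.1 hz).not_ge (h z hzS)

lemma exists_existence_time_le {n : ℕ} {p : ℝ} (T₀ : ℝ) (hp : 1 < p)
    (hpc : p * ((n : ℝ) - 1) < (n : ℝ) + 1) :
    ∃ C > 0, ∀ A > 0, ∀ (H : ℝ → ℝ) (S : EReal), MemAsub n p T₀ A H S →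
      S ≤ ((4 * max (max T₀ 1) (C * A ^ (-(2 * (p - 1) / (2 - ((n : ℝ) - 1) * (p - 1))))) : ℝ) :
        EReal) := by
  set σ := -(((n : ℝ) + 3) * p / 2) + ((n : ℝ) + 1) / 2
  have he : σ + 2 * p = (2 - ((n : ℝ) - 1) * (p - 1)) / 2 := by ring
  have hepos : 0 < σ + 2 * p := by rw [he]; linarith
  have hσ : σ ≤ 0 := by nlinarith [(n.cast_nonneg : (0 : ℝ) ≤ n)]
  have hθ : (p - 1) / (σ + 2 * p) = 2 * (p - 1) / (2 - ((n : ℝ) - 1) * (p - 1)) := by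
    rw [he, div_div_eq_mul_div, mul_comm]
  refine ⟨((p + 1) / (2 * (p - 1) ^ 2 * 5 ^ σ)) ^ (σ + 2 * p)⁻¹, by positivity,
    fun A hA H S hm => EReal.le_coe_of_forall_coe_lt_imp_le fun r hr => ?_⟩
  obtain ⟨-, hH, hH0, hHd0, hconvex, hforce⟩ := hm
  rcases le_or_gt r (4 * max T₀ 1) with hr' | hr'
  · exact hr'.trans (mul_le_mul_of_nonneg_left (le_max_left _ _) zero_le_four)
  have hlt : ∀ x : ℝ, x < r → (x : EReal) < S := fun x hx => (EReal.coe_lt_coe_iff.2 hx).trans hr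
  obtain ⟨hy, hy'⟩ :=
    hasDerivOnIcc_Hd_Hdd hH (b := 4 * (r / 4)) (by rwa [mul_div_cancel₀ r four_ne_zero])
  have hT := le_mul_rpow_of_forced_lifespan_le hA (by linarith [le_max_right T₀ 1]) hp hepos
    (forced_lifespan_le hy hy' hH0 hHd0 hA (by linarith [le_max_right T₀ 1]) hp hσ
      (fun x hx => hconvex x hx.1.le (hlt x (by linarith [hx.2])))
      (fun x hx => hforce x (by linarith [hx.1, le_max_left T₀ 1]) (hlt x (by linarith [hx.2]))))
  rw [hθ] at hT
  linarith [le_max_of_le_right (b := max T₀ 1) hT]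

theorem sub_ode_lemma_general (n : ℕ) (p T₀ : ℝ) (hp : 1 < p)
    (hpc : p * ((n : ℝ) - 1) < (n : ℝ) + 1) :
    (∀ A : ℝ, 0 < A → ∃ M : ℝ, ∀ (H : ℝ → ℝ) (S : EReal),
      MemAsub n p T₀ A H S → S ≤ (M : EReal)) ∧
    (∃ A₀ > (0 : ℝ), ∃ C > (0 : ℝ), ∀ A : ℝ, 0 < A → A < A₀ →
      ∀ (H : ℝ → ℝ) (S : EReal), MemAsub n p T₀ A H S →
        S ≤ ((C * A ^ (-(2 * (p - 1) / (2 - ((n : ℝ) - 1) * (p - 1)))) : ℝ) : EReal)) := by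
  obtain ⟨C, hC, hbound⟩ := exists_existence_time_le T₀ hp hpc
  refine ⟨fun A hA => ⟨_, hbound A hA⟩, 1, one_pos, 4 * max (max T₀ 1) C, by positivity,
    fun A hA hA1 H S hm => (hbound A hA H S hm).trans (EReal.coe_le_coe_iff.2 ?_)⟩
  have hA' : 1 ≤ A ^ (-(2 * (p - 1) / (2 - ((n : ℝ) - 1) * (p - 1)))) :=
    Real.one_le_rpow_of_pos_of_le_one_of_nonpos hA hA1.le
      (neg_nonpos.2 (div_nonneg (by linarith) (by nlinarith)))
  rw [mul_assoc]
  gcongr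
  exact max_le ((le_max_left _ C).trans (le_mul_of_one_le_right (by positivity) hA'))
    (mul_le_mul_of_nonneg_right (le_max_right _ C) (by positivity))

/-- Subcritical ODE lemma: `T_sub(A) = sup {𝒯_H : H ∈ 𝒜_sub(A)}` is finite for every `A > 0`,
and `limsup_{A → 0⁺} T_sub(A) · A^{2(p-1)/(2-(n-1)(p-1))} < ∞`: there are `A₀ > 0`, `C > 0`
with `𝒯_H ≤ C A^{-2(p-1)/(2-(n-1)(p-1))}` for all `A ∈ (0, A₀)`, `H ∈ 𝒜_sub(A)`.
(Here `1 < p` and `p (n-1) < n + 1` encodes `p ∈ (1, p_c(n))`, with `p_c(1) = ∞`.) -/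
theorem sub_ode_lemma (n : ℕ) (hn : 1 ≤ n) (p T₀ : ℝ) (hp : 1 < p)
    (hpc : p * ((n : ℝ) - 1) < (n : ℝ) + 1) (hT₀ : 0 < T₀) :
    (∀ A : ℝ, 0 < A → ∃ M : ℝ, ∀ (H : ℝ → ℝ) (S : EReal),
      MemAsub n p T₀ A H S → S ≤ (M : EReal)) ∧
    (∃ A₀ > (0 : ℝ), ∃ C > (0 : ℝ), ∀ A : ℝ, 0 < A → A < A₀ →
      ∀ (H : ℝ → ℝ) (S : EReal), MemAsub n p T₀ A H S →
        S ≤ ((C * A ^ (-(2 * (p - 1) / (2 - ((n : ℝ) - 1) * (p - 1)))) : ℝ) : EReal)) :=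
  sub_ode_lemma_general n p T₀ hp hpc
end

section
/- Fix n ≥ 1, T₀ > 0, p ∈ (1, p_c(n)), A > 0, and H ∈ 𝒜_sub(A) defined on [0, 𝒯_H). Define sequences by C₁ = A/8, q₁ = 2, T₁ = max{1, T₀}, and for k ≥ 1: q_{k+1} = p(q_k − (n+3)/2) + (n+5)/2, T_{k+1} = 2^{1/(q_{k+1}−1) + 1/q_{k+1}} (T_k + 1) − 1, C_{k+1} = C_k^p / (4 b₀ b₁ p^{2k}). Then for every k ≥ 1 and every t ∈ [T_k, 𝒯_H), one has H(t) ≥ C_k (t+1)^{q_k}. -/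
open Set

/-!
If `H ≥ C (t+1)^q` from `τ` on, the nonlinear inequality gives `H'' ≥ C^p (t+1)^(m-2)`, where `m` is
the next exponent. Integrating once from `τ` (where `H, H' ≥ 0` by the quadratic lower bound coming
from `H'' ≥ A`) gives `H' ≥ C^p/(2(m-1)) (t+1)^(m-1)` as soon as `(t+1)^(m-1) ≥ 2 (τ+1)^(m-1)`;
integrating again gives `H ≥ C^p/(4(m-1)m) (t+1)^m` as soon as `(t+1)^m` has doubled once more,
which is the factor `2^(1/(m-1) + 1/m)` in `T_{k+1}`. The exponents solve an affine recursion,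
`q_k = q* + (2 - q*) p^(k-1)` with `q* < 2` by subcriticality, so that
`(q_{k+1} - 1) q_{k+1} ≤ b₀ b₁ p^(2k)` and the constants `C_{k+1}` are below the ones produced.
-/

open Topology

theorem le_of_hasDerivAt_le {f g f' g' : ℝ → ℝ} {a b : ℝ}
    (hf : ContinuousOn f (Icc a b)) (hg : ContinuousOn g (Icc a b))
    (hf' : ∀ x ∈ Ioo a b, HasDerivAt f (f' x) x) (hg' : ∀ x ∈ Ioo a b, HasDerivAt g (g' x) x)
    (hle : ∀ x ∈ Ioo a b, f' x ≤ g' x) (ha : f a ≤ g a) :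
    ∀ x ∈ Icc a b, f x ≤ g x := by
  have hmono : MonotoneOn (fun x => g x - f x) (Icc a b) := by
    refine monotoneOn_of_hasDerivWithinAt_nonneg (convex_Icc a b) (hg.sub hf) ?_ ?_
      (f' := fun x => g' x - f' x)
    · rw [interior_Icc]
      exact fun x hx => ((hg' x hx).sub (hf' x hx)).hasDerivWithinAt
    · rw [interior_Icc]
      exact fun x hx => sub_nonneg.2 (hle x hx)
  intro x hx
  have := hmono (left_mem_Icc.2 (hx.1.trans hx.2)) hx hx.1
  simp only at this
  linarith

theorem hasDerivAt_add_one_rpow (r x : ℝ) (hx : -1 < x) :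
    HasDerivAt (fun y : ℝ => (y + 1) ^ r) (r * (x + 1) ^ (r - 1)) x := by
  simpa using ((hasDerivAt_id x).add_const 1).rpow_const (p := r) (Or.inl (by simp; linarith))

theorem mul_rpow_sub_le_of_le_deriv {g g' : ℝ → ℝ} {a b c r : ℝ} (ha : -1 < a) (hr : r ≠ 0)
    (hg : ContinuousOn g (Icc a b)) (hg' : ∀ x ∈ Ioo a b, HasDerivAt g (g' x) x)
    (hle : ∀ x ∈ Ioo a b, c * (x + 1) ^ (r - 1) ≤ g' x) (hga : 0 ≤ g a) :
    ∀ x ∈ Icc a b, c / r * ((x + 1) ^ r - (a + 1) ^ r) ≤ g x := by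
  have hφ : ∀ x ∈ Icc a b, HasDerivAt (fun y => c / r * ((y + 1) ^ r - (a + 1) ^ r))
      (c * (x + 1) ^ (r - 1)) x := fun x hx => by
    refine (((hasDerivAt_add_one_rpow r x (by linarith [hx.1])).sub_const
      ((a + 1) ^ r)).const_mul (c / r)).congr_deriv ?_
    field_simp
  refine le_of_hasDerivAt_le (fun x hx => (hφ x hx).continuousAt.continuousWithinAt) hg
    (fun x hx => hφ x (Ioo_subset_Icc_self hx)) hg' hle ?_
  simpa using hga

theorem two_rpow_one_div_mul_rpow {r x : ℝ} (hr : r ≠ 0) (hx : 0 ≤ x) :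
    ((2 : ℝ) ^ (1 / r) * x) ^ r = 2 * x ^ r := by
  rw [Real.mul_rpow (by positivity) hx, ← Real.rpow_mul zero_le_two, one_div_mul_cancel hr,
    Real.rpow_one]

theorem rpow_le_of_le_second_deriv {f f' f'' : ℝ → ℝ} {K m τ t : ℝ} (hτ : -1 < τ) (hm : 1 < m)
    (hK : 0 ≤ K) (hf : ContinuousOn f (Icc τ t)) (hf' : ContinuousOn f' (Icc τ t))
    (hdf : ∀ x ∈ Ioo τ t, HasDerivAt f (f' x) x) (hdf' : ∀ x ∈ Ioo τ t, HasDerivAt f' (f'' x) x)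
    (hfτ : 0 ≤ f τ) (hf'τ : 0 ≤ f' τ) (hf'' : ∀ x ∈ Ioo τ t, K * (x + 1) ^ (m - 2) ≤ f'' x)
    (ht : (2 : ℝ) ^ (1 / (m - 1) + 1 / m) * (τ + 1) ≤ t + 1) :
    K / (4 * (m - 1) * m) * (t + 1) ^ m ≤ f t := by
  have hm1 : 0 < m - 1 := sub_pos.2 hm
  have hm0 : 0 < m := by linarith
  -- From `σ` on, `f' ≥ K/(2(m-1)) (x+1)^(m-1)` because `(σ+1)^(m-1) = 2 (τ+1)^(m-1)`.
  set σ := (2 : ℝ) ^ (1 / (m - 1)) * (τ + 1) - 1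
  have hσ1 : σ + 1 = (2 : ℝ) ^ (1 / (m - 1)) * (τ + 1) := by ring
  have hτσ : τ ≤ σ := by
    have := Real.one_le_rpow one_le_two (one_div_pos.2 hm1).le
    nlinarith
  have hσt : (2 : ℝ) ^ (1 / m) * (σ + 1) ≤ t + 1 := by
    rw [hσ1, ← mul_assoc, ← Real.rpow_add two_pos, add_comm (1 / m)]
    exact ht
  have hσt' : σ ≤ t := by
    have := Real.one_le_rpow one_le_two (one_div_pos.2 hm0).le
    nlinarith
  have hf'_ge : ∀ x ∈ Icc τ t, K / (m - 1) * ((x + 1) ^ (m - 1) - (τ + 1) ^ (m - 1)) ≤ f' x :=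
    mul_rpow_sub_le_of_le_deriv hτ hm1.ne' hf' hdf' (fun x hx => by
      rw [show m - 1 - 1 = m - 2 by ring]; exact hf'' x hx) hf'τ
  have hf'_nonneg : ∀ x ∈ Icc τ t, 0 ≤ f' x := fun x hx => by
    have := Real.rpow_le_rpow (by linarith) (by linarith [hx.1] : τ + 1 ≤ x + 1) hm1.le
    exact le_trans (mul_nonneg (div_nonneg hK hm1.le) (sub_nonneg.2 this)) (hf'_ge x hx)
  have hfσ : 0 ≤ f σ :=
    le_of_hasDerivAt_le (f' := fun _ => 0) continuousOn_const hf
      (fun x _ => hasDerivAt_const x 0) hdf (fun x hx => hf'_nonneg x (Ioo_subset_Icc_self hx))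
      hfτ σ ⟨hτσ, hσt'⟩
  have hf'_ge_half : ∀ x ∈ Ioo σ t, K / (2 * (m - 1)) * (x + 1) ^ (m - 1) ≤ f' x := by
    intro x hx
    have hσx := Real.rpow_le_rpow (by linarith) (by linarith [hx.1] : σ + 1 ≤ x + 1) hm1.le
    rw [hσ1, two_rpow_one_div_mul_rpow hm1.ne' (by linarith)] at hσx
    have := hf'_ge x ⟨hτσ.trans hx.1.le, hx.2.le⟩
    calc K / (2 * (m - 1)) * (x + 1) ^ (m - 1)
        = K / (m - 1) * ((x + 1) ^ (m - 1) - (x + 1) ^ (m - 1) / 2) := by field_simp; ring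
      _ ≤ K / (m - 1) * ((x + 1) ^ (m - 1) - (τ + 1) ^ (m - 1)) := by gcongr; linarith
      _ ≤ f' x := this
  have hf_ge := mul_rpow_sub_le_of_le_deriv (by linarith) hm0.ne'
    (hf.mono (Icc_subset_Icc_left hτσ))
    (fun x hx => hdf x (Ioo_subset_Ioo_left hτσ hx)) hf'_ge_half hfσ t ⟨hσt', le_rfl⟩
  have hσm := Real.rpow_le_rpow (mul_nonneg (by positivity) (by linarith)) hσt hm0.le
  rw [two_rpow_one_div_mul_rpow hm0.ne' (by linarith)] at hσm
  calc K / (4 * (m - 1) * m) * (t + 1) ^ m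
      = K / (2 * (m - 1)) / m * ((t + 1) ^ m - (t + 1) ^ m / 2) := by field_simp; ring
    _ ≤ K / (2 * (m - 1)) / m * ((t + 1) ^ m - (σ + 1) ^ m) := by gcongr; linarith
    _ ≤ f t := hf_ge

section OneSidedDerivatives

variable {V : Set ℝ}

theorem Hd_eqOn_derivWithin (H : ℝ → ℝ) (hV : IsOpen V) :
    EqOn (Hd H) (derivWithin H (Ici 0 ∩ V)) (Ici 0 ∩ V) :=
  fun _ hx => (derivWithin_inter (hV.mem_nhds hx.2)).symm

theorem ContDiffOn.contDiffOn_Hd {H : ℝ → ℝ} (hV : IsOpen V)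
    (hH : ContDiffOn ℝ 2 H (Ici 0 ∩ V)) :
    ContDiffOn ℝ 1 (Hd H) (Ici 0 ∩ V) :=
  (hH.derivWithin ((uniqueDiffOn_Ici 0).inter hV) (by norm_num)).congr (Hd_eqOn_derivWithin H hV)

theorem ContDiffOn.hasDerivAt_derivWithin_Ici {f : ℝ → ℝ} (hV : IsOpen V)
    (hf : ContDiffOn ℝ 1 f (Ici 0 ∩ V)) {x : ℝ} (hx0 : 0 < x) (hxV : x ∈ V) :
    HasDerivAt f (derivWithin f (Ici 0) x) x := by
  have hmem : Ici 0 ∩ V ∈ 𝓝 x := Filter.inter_mem (Ici_mem_nhds hx0) (hV.mem_nhds hxV)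
  rw [derivWithin_of_mem_nhds (Ici_mem_nhds hx0)]
  exact ((hf.differentiableOn one_ne_zero x ⟨hx0.le, hxV⟩).differentiableAt hmem).hasDerivAt

end OneSidedDerivatives

theorem EReal.isOpen_setOf_coe_lt (S : EReal) : IsOpen {x : ℝ | (x : EReal) < S} :=
  isOpen_lt continuous_coe_real_ereal continuous_const

theorem Icc_subset_Ici_inter_setOf_coe_lt {a b : ℝ} {S : EReal} (ha : 0 ≤ a)
    (hb : (b : EReal) < S) : Icc a b ⊆ Ici 0 ∩ {x : ℝ | (x : EReal) < S} :=
  fun _ hx => ⟨ha.trans hx.1, (EReal.coe_le_coe_iff.2 hx.2).trans_lt hb⟩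

namespace MemAsub

variable {n : ℕ} {p T₀ A : ℝ} {H : ℝ → ℝ} {S : EReal}

theorem contDiffOn (hH : MemAsub n p T₀ A H S) :
    ContDiffOn ℝ 2 H (Ici 0 ∩ {x : ℝ | (x : EReal) < S}) :=
  hH.2.1

theorem contDiffOn_Hd (hH : MemAsub n p T₀ A H S) :
    ContDiffOn ℝ 1 (Hd H) (Ici 0 ∩ {x : ℝ | (x : EReal) < S}) :=
  ContDiffOn.contDiffOn_Hd (EReal.isOpen_setOf_coe_lt S) hH.contDiffOn

theorem continuousOn_Icc (hH : MemAsub n p T₀ A H S) {a b : ℝ} (ha : 0 ≤ a)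
    (hb : (b : EReal) < S) : ContinuousOn H (Icc a b) :=
  hH.contDiffOn.continuousOn.mono (Icc_subset_Ici_inter_setOf_coe_lt ha hb)

theorem continuousOn_Hd_Icc (hH : MemAsub n p T₀ A H S) {a b : ℝ} (ha : 0 ≤ a)
    (hb : (b : EReal) < S) : ContinuousOn (Hd H) (Icc a b) :=
  hH.contDiffOn_Hd.continuousOn.mono (Icc_subset_Ici_inter_setOf_coe_lt ha hb)

theorem hasDerivAt (hH : MemAsub n p T₀ A H S) {x : ℝ} (hx0 : 0 < x) (hxS : (x : EReal) < S) :
    HasDerivAt H (Hd H x) x :=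
  (hH.contDiffOn.of_le (by norm_num)).hasDerivAt_derivWithin_Ici
    (EReal.isOpen_setOf_coe_lt S) hx0 hxS

theorem hasDerivAt_Hd (hH : MemAsub n p T₀ A H S) {x : ℝ} (hx0 : 0 < x)
    (hxS : (x : EReal) < S) : HasDerivAt (Hd H) (Hdd H x) x :=
  hH.contDiffOn_Hd.hasDerivAt_derivWithin_Ici (EReal.isOpen_setOf_coe_lt S) hx0 hxS

theorem lower_bounds_quadratic (hH : MemAsub n p T₀ A H S) {t : ℝ} (ht : 0 ≤ t)
    (htS : (t : EReal) < S) : A / 2 * t ^ 2 ≤ H t ∧ A * t ≤ Hd H t := by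
  have ⟨_, _, hH0, hHd0, hHdd, _⟩ := hH
  have hlt : ∀ x ∈ Ioo 0 t, (x : EReal) < S :=
    fun x hx => (EReal.coe_le_coe_iff.2 hx.2.le).trans_lt htS
  have hHd : ∀ x ∈ Icc 0 t, A * x ≤ Hd H x :=
    le_of_hasDerivAt_le (continuous_const.mul continuous_id).continuousOn
      (hH.continuousOn_Hd_Icc le_rfl htS)
      (fun x _ => by simpa using (hasDerivAt_id x).const_mul A)
      (fun x hx => hH.hasDerivAt_Hd hx.1 (hlt x hx))
      (fun x hx => hHdd x hx.1.le (hlt x hx)) (by simp [hHd0])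
  refine ⟨le_of_hasDerivAt_le (f := fun x => A / 2 * x ^ 2) (by fun_prop)
    (hH.continuousOn_Icc le_rfl htS) (fun x _ => ?_) (fun x hx => hH.hasDerivAt hx.1 (hlt x hx))
    (fun x hx => hHd x (Ioo_subset_Icc_self hx)) (by simp [hH0]) t ⟨ht, le_rfl⟩,
    hHd t ⟨ht, le_rfl⟩⟩
  exact ((hasDerivAt_pow 2 x).const_mul (A / 2)).congr_deriv (by push_cast; ring)

theorem div_eight_mul_sq_le (hH : MemAsub n p T₀ A H S) (hA : 0 ≤ A) {t : ℝ} (ht : 1 ≤ t)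
    (htS : (t : EReal) < S) : A / 8 * (t + 1) ^ 2 ≤ H t := by
  have := (hH.lower_bounds_quadratic (by linarith) htS).1
  nlinarith [mul_nonneg hA (mul_nonneg (sub_nonneg.2 ht) (by linarith : (0 : ℝ) ≤ 3 * t + 1))]

theorem rpow_le_Hdd (hH : MemAsub n p T₀ A H S) (hp : 0 ≤ p) {C q s : ℝ} (hC : 0 ≤ C)
    (hs : 0 ≤ s) (hsT₀ : T₀ ≤ s) (hsS : (s : EReal) < S) (hHs : C * (s + 1) ^ q ≤ H s) :
    C ^ p * (s + 1) ^ (p * (q - ((n : ℝ) + 3) / 2) + ((n : ℝ) + 5) / 2 - 2) ≤ Hdd H s := by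
  have ⟨_, _, _, _, _, hHdd⟩ := hH
  have hs1 : 0 < s + 1 := by linarith
  calc C ^ p * (s + 1) ^ (p * (q - ((n : ℝ) + 3) / 2) + ((n : ℝ) + 5) / 2 - 2)
      = (s + 1) ^ (-(((n : ℝ) + 3) * p / 2) + ((n : ℝ) + 1) / 2) * (C * (s + 1) ^ q) ^ p := by
        rw [Real.mul_rpow hC (by positivity), ← Real.rpow_mul hs1.le,
          show p * (q - ((n : ℝ) + 3) / 2) + ((n : ℝ) + 5) / 2 - 2
            = -(((n : ℝ) + 3) * p / 2) + ((n : ℝ) + 1) / 2 + q * p by ring,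
          Real.rpow_add hs1]
        ring
    _ ≤ (s + 1) ^ (-(((n : ℝ) + 3) * p / 2) + ((n : ℝ) + 1) / 2) * H s ^ p := by gcongr
    _ ≤ Hdd H s := hHdd s hsT₀ hsS

theorem rpow_le_of_rpow_le (hH : MemAsub n p T₀ A H S) (hA : 0 ≤ A) (hp : 0 ≤ p)
    {C q m τ t : ℝ} (hC : 0 ≤ C) (hτ : 0 ≤ τ) (hτT₀ : T₀ ≤ τ)
    (hm : m = p * (q - ((n : ℝ) + 3) / 2) + ((n : ℝ) + 5) / 2) (hm1 : 1 < m)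
    (hbound : ∀ s, τ ≤ s → (s : EReal) < S → C * (s + 1) ^ q ≤ H s)
    (ht : (2 : ℝ) ^ (1 / (m - 1) + 1 / m) * (τ + 1) ≤ t + 1) (htS : (t : EReal) < S) :
    C ^ p / (4 * (m - 1) * m) * (t + 1) ^ m ≤ H t := by
  have hτt : τ ≤ t := by
    have := Real.one_le_rpow one_le_two
      (add_pos (one_div_pos.2 (sub_pos.2 hm1)) (one_div_pos.2 (by linarith : 0 < m))).le
    nlinarith
  have hlt : ∀ x ∈ Icc τ t, (x : EReal) < S :=
    fun x hx => (EReal.coe_le_coe_iff.2 hx.2).trans_lt htS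
  have hHτ := hH.lower_bounds_quadratic hτ (hlt τ ⟨le_rfl, hτt⟩)
  refine rpow_le_of_le_second_deriv (by linarith) hm1 (by positivity)
    (hH.continuousOn_Icc hτ htS) (hH.continuousOn_Hd_Icc hτ htS)
    (fun x hx => hH.hasDerivAt (hτ.trans_lt hx.1) (hlt x (Ioo_subset_Icc_self hx)))
    (fun x hx => hH.hasDerivAt_Hd (hτ.trans_lt hx.1) (hlt x (Ioo_subset_Icc_self hx)))
    ((by positivity : 0 ≤ A / 2 * τ ^ 2).trans hHτ.1) ((mul_nonneg hA hτ).trans hHτ.2)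
    (fun x hx => ?_) ht
  rw [hm]
  exact hH.rpow_le_Hdd hp hC (hτ.trans hx.1.le) (hτT₀.trans hx.1.le)
    (hlt x (Ioo_subset_Icc_self hx)) (hbound x hx.1.le (hlt x (Ioo_subset_Icc_self hx)))

end MemAsub

theorem add_mul_pow_le {c x p : ℝ} (hp : 1 ≤ p) {k : ℕ} (hk : 1 ≤ k) :
    x + c * p ^ k ≤ (c + max 0 x * p⁻¹) * p ^ k := by
  obtain ⟨j, rfl⟩ : ∃ j, k = j + 1 := ⟨k - 1, by omega⟩
  have hpow : max 0 x * p⁻¹ * p ^ (j + 1) = max 0 x * p ^ j := by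
    rw [pow_succ]; field_simp
  have hx : x ≤ max 0 x * p ^ j :=
    (le_max_right 0 x).trans (le_mul_of_one_le_right (le_max_left 0 x) (one_le_pow₀ hp))
  rw [add_mul, hpow]
  linarith

/-- The fixed point of the affine map `q ↦ p (q - (n+3)/2) + (n+5)/2` generating the exponents. -/
noncomputable def qStar (n : ℕ) (p : ℝ) : ℝ := ((n : ℝ) + 3) / 2 - 1 / (p - 1)

section Sequences

variable {n : ℕ} {p : ℝ}

theorem qStar_lt_two (hp : 1 < p) (hpc : p * ((n : ℝ) - 1) < (n : ℝ) + 1) : qStar n p < 2 := by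
  have hp1 : 0 < p - 1 := sub_pos.2 hp
  have : ((n : ℝ) - 1) / 2 < 1 / (p - 1) := by
    rw [lt_div_iff₀ hp1]
    nlinarith
  unfold qStar
  linarith

theorem bb0_eq : bb0 n p = 2 - qStar n p + max 0 (qStar n p) * p⁻¹ := by
  unfold bb0 qStar
  ring

theorem bb1_eq : bb1 n p = 2 - qStar n p + max 0 (qStar n p - 1) * p⁻¹ := by
  rw [show qStar n p - 1 = ((n : ℝ) + 1) / 2 - 1 / (p - 1) by unfold qStar; ring]
  unfold bb1 qStar
  ring

theorem bb0_pos (hp : 1 < p) (hpc : p * ((n : ℝ) - 1) < (n : ℝ) + 1) : 0 < bb0 n p := by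
  have := qStar_lt_two hp hpc
  have : 0 ≤ max 0 (qStar n p) * p⁻¹ := mul_nonneg (le_max_left _ _) (by positivity)
  rw [bb0_eq]
  linarith

theorem bb1_pos (hp : 1 < p) (hpc : p * ((n : ℝ) - 1) < (n : ℝ) + 1) : 0 < bb1 n p := by
  have := qStar_lt_two hp hpc
  have : 0 ≤ max 0 (qStar n p - 1) * p⁻¹ := mul_nonneg (le_max_left _ _) (by positivity)
  rw [bb1_eq]
  linarith

variable {q : ℕ → ℝ}

theorem eq_qStar_add (hp : 1 < p) (hq1 : q 1 = 2)
    (hqrec : ∀ k : ℕ, 1 ≤ k → q (k + 1) = p * (q k - ((n : ℝ) + 3) / 2) + ((n : ℝ) + 5) / 2)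
    {k : ℕ} (hk : 1 ≤ k) : q k = qStar n p + (2 - qStar n p) * p ^ (k - 1) := by
  have hp1 : p - 1 ≠ 0 := (sub_pos.2 hp).ne'
  induction k, hk using Nat.le_induction with
  | base => simp [hq1]
  | succ k hk ih =>
    obtain ⟨j, rfl⟩ : ∃ j, k = j + 1 := ⟨k - 1, by omega⟩
    rw [hqrec _ hk, ih]
    simp only [Nat.add_sub_cancel, pow_succ, qStar]
    field_simp
    ring

theorem two_le_of_rec (hp : 1 < p) (hpc : p * ((n : ℝ) - 1) < (n : ℝ) + 1) (hq1 : q 1 = 2)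
    (hqrec : ∀ k : ℕ, 1 ≤ k → q (k + 1) = p * (q k - ((n : ℝ) + 3) / 2) + ((n : ℝ) + 5) / 2)
    {k : ℕ} (hk : 1 ≤ k) : 2 ≤ q k := by
  have h2 := sub_pos.2 (qStar_lt_two hp hpc)
  have hpow : 1 ≤ p ^ (k - 1) := one_le_pow₀ hp.le
  rw [eq_qStar_add hp hq1 hqrec hk]
  nlinarith

theorem sub_one_mul_le_of_rec (hp : 1 < p) (hpc : p * ((n : ℝ) - 1) < (n : ℝ) + 1)
    (hq1 : q 1 = 2)
    (hqrec : ∀ k : ℕ, 1 ≤ k → q (k + 1) = p * (q k - ((n : ℝ) + 3) / 2) + ((n : ℝ) + 5) / 2)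
    {k : ℕ} (hk : 1 ≤ k) : (q (k + 1) - 1) * q (k + 1) ≤ bb0 n p * bb1 n p * p ^ (2 * k) := by
  have hq := eq_qStar_add hp hq1 hqrec (Nat.le_add_left 1 k)
  rw [Nat.add_sub_cancel] at hq
  have h0 : q (k + 1) ≤ bb0 n p * p ^ k := by
    rw [hq, bb0_eq]
    exact add_mul_pow_le hp.le hk
  have h1 : q (k + 1) - 1 ≤ bb1 n p * p ^ k := by
    have := add_mul_pow_le (x := qStar n p - 1) (c := 2 - qStar n p) hp.le hk
    rw [hq, bb1_eq]
    linarith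
  have h2 := two_le_of_rec hp hpc hq1 hqrec (Nat.le_add_left 1 k)
  calc (q (k + 1) - 1) * q (k + 1) ≤ (bb1 n p * p ^ k) * (bb0 n p * p ^ k) :=
        mul_le_mul h1 h0 (by linarith) (by linarith)
    _ = bb0 n p * bb1 n p * p ^ (2 * k) := by rw [two_mul, pow_add]; ring

theorem max_one_le_of_rec {T : ℕ → ℝ} {T₀ : ℝ} (hT1 : T 1 = max 1 T₀)
    (hTrec : ∀ k : ℕ, 1 ≤ k →
      T (k + 1) = (2 : ℝ) ^ (1 / (q (k + 1) - 1) + 1 / q (k + 1)) * (T k + 1) - 1)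
    (hq : ∀ k : ℕ, 1 ≤ k → 2 ≤ q k) {k : ℕ} (hk : 1 ≤ k) : max 1 T₀ ≤ T k := by
  induction k, hk using Nat.le_induction with
  | base => exact hT1.ge
  | succ k hk ih =>
    have hqk := hq (k + 1) (by omega)
    have h2 : (1 : ℝ) ≤ 2 ^ (1 / (q (k + 1) - 1) + 1 / q (k + 1)) :=
      Real.one_le_rpow one_le_two (add_nonneg (one_div_nonneg.2 (by linarith))
        (one_div_nonneg.2 (by linarith)))
    have : 0 ≤ T k + 1 := by linarith [le_max_left 1 T₀]
    rw [hTrec k hk]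
    nlinarith

theorem nonneg_of_rec {C : ℕ → ℝ} {A : ℝ} (hp : 1 < p) (hpc : p * ((n : ℝ) - 1) < (n : ℝ) + 1)
    (hA : 0 ≤ A) (hC1 : C 1 = A / 8)
    (hCrec : ∀ k : ℕ, 1 ≤ k → C (k + 1) = C k ^ p / (4 * bb0 n p * bb1 n p * p ^ (2 * k)))
    {k : ℕ} (hk : 1 ≤ k) : 0 ≤ C k := by
  induction k, hk using Nat.le_induction with
  | base => rw [hC1]; positivity
  | succ k hk ih =>
    have hden : 0 < 4 * bb0 n p * bb1 n p * p ^ (2 * k) :=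
      mul_pos (mul_pos (mul_pos four_pos (bb0_pos hp hpc)) (bb1_pos hp hpc))
        (pow_pos (by linarith) _)
    rw [hCrec k hk]
    exact div_nonneg (Real.rpow_nonneg ih p) hden.le

end Sequences

theorem sub_iteration_claim_general (n : ℕ) (p T₀ A : ℝ) (hp : 1 < p)
    (hpc : p * ((n : ℝ) - 1) < (n : ℝ) + 1) (hA : 0 < A)
    (H : ℝ → ℝ) (S : EReal) (hH : MemAsub n p T₀ A H S)
    (C q T : ℕ → ℝ)
    (hC1 : C 1 = A / 8) (hq1 : q 1 = 2) (hT1 : T 1 = max 1 T₀)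
    (hqrec : ∀ k : ℕ, 1 ≤ k → q (k + 1) = p * (q k - ((n : ℝ) + 3) / 2) + ((n : ℝ) + 5) / 2)
    (hTrec : ∀ k : ℕ, 1 ≤ k →
      T (k + 1) = (2 : ℝ) ^ (1 / (q (k + 1) - 1) + 1 / q (k + 1)) * (T k + 1) - 1)
    (hCrec : ∀ k : ℕ, 1 ≤ k → C (k + 1) = C k ^ p / (4 * bb0 n p * bb1 n p * p ^ (2 * k))) :
    ∀ k : ℕ, 1 ≤ k → ∀ t : ℝ, T k ≤ t → (t : EReal) < S →
      C k * (t + 1) ^ (q k) ≤ H t := by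
  have hq2 k (hk : 1 ≤ k) := two_le_of_rec hp hpc hq1 hqrec hk
  have hT k (hk : 1 ≤ k) := max_one_le_of_rec hT1 hTrec hq2 hk
  have hC k (hk : 1 ≤ k) := nonneg_of_rec hp hpc hA.le hC1 hCrec hk
  intro k hk
  induction k, hk using Nat.le_induction with
  | base =>
    intro t ht htS
    rw [hC1, hq1, Real.rpow_two]
    exact hH.div_eight_mul_sq_le hA.le ((le_max_left 1 T₀).trans (hT1 ▸ ht)) htS
  | succ k hk ih =>
    intro t ht htS
    have hm := hq2 (k + 1) (by omega)
    have hTk := hT k hk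
    have hCk1 : C (k + 1) ≤ C k ^ p / (4 * (q (k + 1) - 1) * q (k + 1)) := by
      rw [hCrec k hk]
      exact div_le_div_of_nonneg_left (Real.rpow_nonneg (hC k hk) p) (by nlinarith)
        (by linarith [sub_one_mul_le_of_rec hp hpc hq1 hqrec hk])
    calc C (k + 1) * (t + 1) ^ q (k + 1)
        ≤ C k ^ p / (4 * (q (k + 1) - 1) * q (k + 1)) * (t + 1) ^ q (k + 1) :=
          mul_le_mul_of_nonneg_right hCk1
            (Real.rpow_nonneg (by linarith [le_max_left 1 T₀, hT (k + 1) (by omega)]) _)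
      _ ≤ H t := hH.rpow_le_of_rpow_le hA.le (by linarith) (hC k hk)
          (by linarith [le_max_left 1 T₀]) ((le_max_right 1 T₀).trans hTk) (hqrec k hk)
          (by linarith) ih (by linarith [hTrec k hk]) htS

/-- Iteration claim in the subcritical case: with `C₁ = A/8`, `q₁ = 2`, `T₁ = max {1, T₀}` and
the stated recursions, every `H ∈ 𝒜_sub(A)` satisfies `H(t) ≥ C_k (t+1)^{q_k}` for
`t ∈ [T_k, 𝒯_H)`, `k ≥ 1`. -/
theorem sub_iteration_claim (n : ℕ) (hn : 1 ≤ n) (p T₀ A : ℝ) (hp : 1 < p)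
    (hpc : p * ((n : ℝ) - 1) < (n : ℝ) + 1) (hT₀ : 0 < T₀) (hA : 0 < A)
    (H : ℝ → ℝ) (S : EReal) (hH : MemAsub n p T₀ A H S)
    (C q T : ℕ → ℝ)
    (hC1 : C 1 = A / 8) (hq1 : q 1 = 2) (hT1 : T 1 = max 1 T₀)
    (hqrec : ∀ k : ℕ, 1 ≤ k → q (k + 1) = p * (q k - ((n : ℝ) + 3) / 2) + ((n : ℝ) + 5) / 2)
    (hTrec : ∀ k : ℕ, 1 ≤ k →
      T (k + 1) = (2 : ℝ) ^ (1 / (q (k + 1) - 1) + 1 / q (k + 1)) * (T k + 1) - 1)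
    (hCrec : ∀ k : ℕ, 1 ≤ k → C (k + 1) = C k ^ p / (4 * bb0 n p * bb1 n p * p ^ (2 * k))) :
    ∀ k : ℕ, 1 ≤ k → ∀ t : ℝ, T k ≤ t → (t : EReal) < S →
      C k * (t + 1) ^ (q k) ≤ H t :=
  sub_iteration_claim_general n p T₀ A hp hpc hA H S hH C q T hC1 hq1 hT1 hqrec hTrec hCrec
end
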